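/- arXiv:2110.14400 — 3 statements merged into one kernel-verified Lean document; each statement's English description precedes it below -/
import Mathlib

section
/- Let S be a semigroup, a ∈ S, and suppose: (1) T := {σ ∈ S : σaσ = σ} is nonempty, (2) aτa = a for every τ ∈ S. Then in the variant S^a (operation x ⋆ y = xay), the map φ : S → S, φ(ξ) = ξ ⋆ ξ = ξaξ, satisfies φ(σ) = σ for σ ∈ T, φ(ξ) ∈ T for all ξ ∈ S, and σ ⋆ τ = φ(σ) ⋆ φ(τ) for all σ, τ ∈ S. Thus S^a is an inflation of T along φ. -/
section Sandwich

variable {S : Type*} [Semigroup S] {a : S}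

theorem mul_mul_mul_mul_eq_of_mul_mul_eq {y : S} (hy : a * y * a = a) (x z : S) :
    x * a * y * a * z = x * a * z := by
  simpa only [mul_assoc] using congrArg (x * · * z) hy

theorem mul_mul_eq_mul_self_mul_mul_self {x y : S} (hx : a * x * a = a) (hy : a * y * a = a) :
    x * a * y = (x * a * x) * a * (y * a * y) := by
  calc x * a * y = x * a * x * a * y := (mul_mul_mul_mul_eq_of_mul_mul_eq hx x y).symm
    _ = x * a * x * a * y * a * y := (mul_mul_mul_mul_eq_of_mul_mul_eq hy (x * a * x) y).symm
    _ = (x * a * x) * a * (y * a * y) := by simp only [mul_assoc]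

end Sandwich

theorem variant_inflation_of_sandwich_regulars_general {S : Type*} [Semigroup S] (a : S)
    (ha : ∀ τ : S, a * τ * a = a) :
    (∀ σ ∈ {σ : S | σ * a * σ = σ}, σ * a * σ = σ) ∧
    (∀ ξ : S, (ξ * a * ξ) * a * (ξ * a * ξ) = ξ * a * ξ) ∧
    (∀ σ τ : S, σ * a * τ = (σ * a * σ) * a * ((τ * a * τ))) :=
  ⟨fun _ hσ => hσ,
    fun ξ => (mul_mul_eq_mul_self_mul_mul_self (ha ξ) (ha ξ)).symm,
    fun _ _ => mul_mul_eq_mul_self_mul_mul_self (ha _) (ha _)⟩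

/-- Suppose `T = {σ | σ*a*σ = σ}` is nonempty and `a*τ*a = a` for all `τ`. Then in the
variant `S^a`, the map `φ ξ = ξ*a*ξ` fixes `T` pointwise, maps into `T`, and satisfies
`σ ⋆ τ = φ σ ⋆ φ τ`; thus `S^a` is an inflation of `T` along `φ`. -/
theorem variant_inflation_of_sandwich_regulars {S : Type*} [Semigroup S] (a : S)
    (hT : ∃ σ : S, σ * a * σ = σ)
    (ha : ∀ τ : S, a * τ * a = a) :
    (∀ σ ∈ {σ : S | σ * a * σ = σ}, σ * a * σ = σ) ∧
    (∀ ξ : S, (ξ * a * ξ) * a * (ξ * a * ξ) = ξ * a * ξ) ∧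
    (∀ σ τ : S, σ * a * τ = (σ * a * σ) * a * ((τ * a * τ))) :=
  variant_inflation_of_sandwich_regulars_general a ha
end

section
/- Let n, k, r, q ∈ ℕ with n ≥ k ≥ r ≥ q ≥ 1, n ≡ k (mod 2), and n ≥ k + 2. Then μ(n,k,r,q) > μ(n,k+2,r,q), where μ(n,k,r,q) is the number of PB-pairs (η,X) on {1,…,n} with |X| = q whose join with (ε_{n,k},{1,…,r}) has rank q. -/
/-- An equivalence is a 1-2-equivalence if every class has size at most 2. -/
def IsOneTwo {T : Type*} (ε : Setoid T) : Prop :=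
  ∀ x : T, ({y : T | ε.r x y}).ncard ≤ 2

/-- A PB-pair: a 1-2-equivalence together with a set of elements lying in
singleton classes. -/
def IsPBPair {T : Type*} (ε : Setoid T) (X : Set T) : Prop :=
  IsOneTwo ε ∧ ∀ x ∈ X, ∀ y : T, ε.r x y → y = x

/-- The rank of the join of two PB-pairs: the number of pairs `(x, y) ∈ X₁ × X₂`
lying in a common class of the join `ε₁ ⊔ ε₂` of the equivalences. -/
noncomputable def joinRank {T : Type*} (ε₁ : Setoid T) (X₁ : Set T)
    (ε₂ : Setoid T) (X₂ : Set T) : ℕ :=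
  {p : T × T | p.1 ∈ X₁ ∧ p.2 ∈ X₂ ∧ (ε₁ ⊔ ε₂).r p.1 p.2}.ncard

/-- The 1-2-equivalence `ε_{n,k}` on `{0,…,n-1}` with singleton classes
`{0},…,{k-1}` and doubleton classes `{k,k+1}, {k+2,k+3}, …`. -/
def epsNK (n k : ℕ) : Setoid (Fin n) where
  r x y := x = y ∨ (k ≤ x.val ∧ k ≤ y.val ∧ (x.val - k) / 2 = (y.val - k) / 2)
  iseqv := by
    constructor
    · exact fun x => Or.inl rfl
    · rintro x y (rfl | ⟨h1, h2, h3⟩)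
      · exact Or.inl rfl
      · exact Or.inr ⟨h2, h1, h3.symm⟩
    · rintro x y z (rfl | ⟨h1, h2, h3⟩) h
      · exact h
      · rcases h with rfl | ⟨h4, h5, h6⟩
        · exact Or.inr ⟨h1, h2, h3⟩
        · exact Or.inr ⟨h1, h5, h3.trans h6⟩

/-- The domain `[r] = {0,…,r-1}` inside `Fin n`. -/
def domSet (n r : ℕ) : Set (Fin n) := {x : Fin n | x.val < r}

/-- `mu n k r q` is the number of PB-pairs `(η, X)` on an `n`-set with `|X| = q`
whose join with `(ε_{n,k}, [r])` has rank `q`; it is `0` if `(ε_{n,k}, [r])` is not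
a well-defined PB-pair (i.e. unless `n ≥ k ≥ r` and `n ≡ k (mod 2)`). -/
noncomputable def mu (n k r q : ℕ) : ℕ :=
  if k ≤ n ∧ r ≤ k ∧ n % 2 = k % 2 then
    {p : Setoid (Fin n) × Set (Fin n) |
      IsPBPair p.1 p.2 ∧ p.2.ncard = q ∧
      joinRank (epsNK n k) (domSet n r) p.1 p.2 = q}.ncard
  else 0

/-!
Let `e` and `h` be the involutions exchanging the two points of each doubleton class of
1-2-equivalences `ε` and `η`. Every class of `ε ⊔ η` is an orbit of the dihedral group `⟨e, h⟩`.
If `y` is an `η`-singleton, its class is the orbit of `y` under the rotation `ρ = e * h`, on which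
`e` acts as the reflection `ρ ^ m • y ↦ ρ ^ (1 - m) • y`. On a cycle of length `p` this reflection
has a fixed point only when `p` is odd, and then exactly one. Hence the class of `y` contains at
most one `ε`-singleton.

So for PB-pairs `(ε, X)` and `(η, Y)` the rank of the join is `|Y|` exactly when every point of
`Y` is joined to some point of `X`. As `ε_{n,k+2} ≤ ε_{n,k}`, every pair counted by
`μ(n,k+2,r,q)` is counted by `μ(n,k,r,q)`. Take `η` joining `0` and `k + 1` and
`Y = {1, …, q-1, k}`: under `ε_{n,k}` the point `k` reaches `0` through `k + 1`, while in
`ε_{n,k+2} ⊔ η` it is a singleton class, so this pair is counted only by `μ(n,k,r,q)`.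
-/

section Dihedral

variable {G α : Type*} [Group G] [MulAction G α] {e h : G} {y : α}

theorem left_smul_zpow_mul_smul (he : e * e = 1) (hh : h * h = 1) (hy : h • y = y) (m : ℤ) :
    e • (e * h) ^ m • y = (e * h) ^ (1 - m) • y := by
  have he' : e⁻¹ = e := inv_eq_of_mul_eq_one_right he
  have hconj : e * (e * h) * e⁻¹ = (e * h)⁻¹ := by
    rw [he', mul_inv_rev, he', inv_eq_of_mul_eq_one_right hh, ← mul_assoc, he, one_mul]
  have hcomm : e * (e * h) ^ m = (e * h) ^ (-m) * e := by
    rw [zpow_neg, ← inv_zpow, ← hconj, conj_zpow, inv_mul_cancel_right]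
  have hey : e • y = (e * h) • y := by rw [mul_smul, hy]
  rw [smul_smul, hcomm, mul_smul, hey, smul_smul, ← zpow_add_one, neg_add_eq_sub]

theorem right_smul_zpow_mul_smul (he : e * e = 1) (hh : h * h = 1) (hy : h • y = y) (m : ℤ) :
    h • (e * h) ^ m • y = (e * h) ^ (-m) • y := by
  calc h • (e * h) ^ m • y = e • (e * h) ^ (1 + m) • y := by
        rw [zpow_one_add, mul_smul, smul_smul e, ← mul_assoc, he, one_mul]
    _ = (e * h) ^ (-m) • y := by
        rw [left_smul_zpow_mul_smul he hh hy, sub_add_cancel_left]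

theorem zpow_mul_smul_eq_of_fixed (he : e * e = 1) (hh : h * h = 1) (hy : h • y = y) {a b : ℤ}
    (ha : e • (e * h) ^ a • y = (e * h) ^ a • y) (hb : e • (e * h) ^ b • y = (e * h) ^ b • y) :
    (e * h) ^ a • y = (e * h) ^ b • y := by
  have hfix : ∀ c : ℤ, e • (e * h) ^ c • y = (e * h) ^ c • y →
      (e * h) ^ (1 - 2 * c) ∈ MulAction.stabilizer G y := by
    intro c hc
    rw [left_smul_zpow_mul_smul he hh hy] at hc
    rw [MulAction.mem_stabilizer_iff, show 1 - 2 * c = -c + (1 - c) by ring, zpow_add, mul_smul,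
      hc, ← mul_smul, ← zpow_add, neg_add_cancel, zpow_zero, one_smul]
  -- `b - a = (1 - 2a) (b - a) + a ((1 - 2a) - (1 - 2b))`
  have hab : (e * h) ^ (b - a) ∈ MulAction.stabilizer G y := by
    have key : (e * h) ^ (b - a) = ((e * h) ^ (1 - 2 * a)) ^ (b - a) *
        ((e * h) ^ (1 - 2 * a) * ((e * h) ^ (1 - 2 * b))⁻¹) ^ a := by
      group
    rw [key]
    exact mul_mem (zpow_mem (hfix a ha) _)
      (zpow_mem (mul_mem (hfix a ha) (inv_mem (hfix b hb))) _)
  calc (e * h) ^ a • y = (e * h) ^ a • (e * h) ^ (b - a) • y := by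
        rw [MulAction.mem_stabilizer_iff.mp hab]
    _ = (e * h) ^ b • y := by rw [smul_smul, ← zpow_add, add_sub_cancel]

end Dihedral

instance Setoid.finite {T : Type*} [Finite T] : Finite (Setoid T) :=
  Finite.of_injective (fun σ : Setoid T => σ.r) fun _ _ h =>
    Setoid.ext fun a b => iff_of_eq (congrFun₂ h a b)

section OneTwo

variable {T : Type*}

theorem isOneTwo_iff [Finite T] {σ : Setoid T} :
    IsOneTwo σ ↔ ∀ x y z, σ.r x y → σ.r x z → y = x ∨ z = x ∨ y = z := by
  refine forall_congr' fun x => ?_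
  rw [← not_lt, Set.two_lt_ncard_iff]
  constructor
  · intro h y z hy hz
    by_contra! hne
    exact h ⟨x, y, z, σ.refl x, hy, hz, hne.1.symm, hne.2.1.symm, hne.2.2⟩
  · rintro h ⟨a, b, c, ha, hb, hc, hab, hac, hbc⟩
    have := h a b ha hb
    have := h a c ha hc
    have := h b c hb hc
    grind

theorem IsOneTwo.exists_perm [Finite T] {σ : Setoid T} (hσ : IsOneTwo σ) :
    ∃ e : Equiv.Perm T, e * e = 1 ∧ ∀ a b, σ.r a b ↔ b = a ∨ b = e a := by
  have hpartner : ∀ a, ∃ p, ∀ b, σ.r a b ↔ b = a ∨ b = p := by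
    intro a
    by_cases hex : ∃ p, σ.r a p ∧ p ≠ a
    · obtain ⟨p, hp, hpa⟩ := hex
      refine ⟨p, fun b => ⟨fun hb => ?_, ?_⟩⟩
      · rcases isOneTwo_iff.mp hσ a b p hb hp with h | h | h
        · exact Or.inl h
        · exact absurd h hpa
        · exact Or.inr h
      · rintro (rfl | rfl)
        exacts [σ.refl b, hp]
    · push Not at hex
      exact ⟨a, fun b => ⟨fun hb => Or.inl (hex b hb), by rintro (rfl | rfl) <;> exact σ.refl b⟩⟩
  choose p hp using hpartner
  have hinv : Function.Involutive p := by
    intro a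
    rcases (hp (p a) a).mp (σ.symm ((hp a (p a)).mpr (Or.inr rfl))) with h | h
    · rw [← h, ← h]
    · exact h.symm
  exact ⟨hinv.toPerm p, Equiv.ext hinv, hp⟩

theorem Setoid.le_ker_mem_of_perm {σ : Setoid T} {g : Equiv.Perm T} {S : Set T} (hg : g * g = 1)
    (hσ : ∀ a b, σ.r a b ↔ b = a ∨ b = g a) (hS : ∀ x ∈ S, g x ∈ S) :
    σ ≤ Setoid.ker (· ∈ S) := by
  intro a b hab
  rcases (hσ a b).mp hab with rfl | rfl
  · rfl
  · refine propext ⟨hS a, fun hga => ?_⟩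
    simpa [← Equiv.Perm.mul_apply, hg] using hS _ hga

theorem IsOneTwo.eq_of_sup_rel [Finite T] {ε η : Setoid T} (hε : IsOneTwo ε) (hη : IsOneTwo η)
    {y z₁ z₂ : T} (hy : ∀ w, η.r y w → w = y) (h₁ : (ε ⊔ η).r y z₁) (h₂ : (ε ⊔ η).r y z₂)
    (hz₁ : ∀ w, ε.r z₁ w → w = z₁) (hz₂ : ∀ w, ε.r z₂ w → w = z₂) : z₁ = z₂ := by
  obtain ⟨e, he, hεe⟩ := hε.exists_perm
  obtain ⟨h, hh, hηh⟩ := hη.exists_perm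
  have hhy : h • y = y := hy _ ((hηh y _).mpr (Or.inr rfl))
  set S := Set.range fun m : ℤ => (e * h) ^ m • y
  have hle : ε ⊔ η ≤ Setoid.ker (· ∈ S) := by
    refine sup_le (Setoid.le_ker_mem_of_perm he hεe ?_) (Setoid.le_ker_mem_of_perm hh hηh ?_)
    · rintro _ ⟨m, rfl⟩
      exact ⟨1 - m, (left_smul_zpow_mul_smul he hh hhy m).symm⟩
    · rintro _ ⟨m, rfl⟩
      exact ⟨-m, (right_smul_zpow_mul_smul he hh hhy m).symm⟩
  have hyS : y ∈ S := ⟨0, by simp⟩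
  obtain ⟨a, rfl⟩ : z₁ ∈ S := Setoid.ker_def.mp (hle h₁) ▸ hyS
  obtain ⟨b, rfl⟩ : z₂ ∈ S := Setoid.ker_def.mp (hle h₂) ▸ hyS
  exact zpow_mul_smul_eq_of_fixed he hh hhy (hz₁ _ ((hεe _ _).mpr (Or.inr rfl)))
    (hz₂ _ ((hεe _ _).mpr (Or.inr rfl)))

theorem joinRank_eq_ncard_iff [Finite T] {ε₁ ε₂ : Setoid T} {X₁ X₂ : Set T}
    (h₁ : IsPBPair ε₁ X₁) (h₂ : IsPBPair ε₂ X₂) :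
    joinRank ε₁ X₁ ε₂ X₂ = X₂.ncard ↔ ∀ y ∈ X₂, ∃ x ∈ X₁, (ε₁ ⊔ ε₂).r x y := by
  set P := {p : T × T | p.1 ∈ X₁ ∧ p.2 ∈ X₂ ∧ (ε₁ ⊔ ε₂).r p.1 p.2}
  have hinj : Set.InjOn Prod.snd P := by
    rintro ⟨x, y⟩ ⟨hx, hy, hxy⟩ ⟨x', y'⟩ ⟨hx', -, hxy'⟩ (rfl : y = y')
    obtain rfl : x = x' := h₁.1.eq_of_sup_rel h₂.1 (h₂.2 y hy) ((ε₁ ⊔ ε₂).symm hxy)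
      ((ε₁ ⊔ ε₂).symm hxy') (h₁.2 x hx) (h₁.2 x' hx')
    rfl
  have himage : Prod.snd '' P ⊆ X₂ := by
    rintro _ ⟨p, hp, rfl⟩
    exact hp.2.1
  change P.ncard = _ ↔ _
  rw [← hinj.ncard_image]
  constructor
  · intro hcard y hy
    rw [← Set.eq_of_subset_of_ncard_le himage hcard.ge] at hy
    obtain ⟨⟨x, y⟩, ⟨hx, -, hxy⟩, rfl⟩ := hy
    exact ⟨x, hx, hxy⟩
  · intro h
    congr 1
    refine himage.antisymm fun y hy => ?_
    obtain ⟨x, hx, hxy⟩ := h y hy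
    exact ⟨(x, y), ⟨hx, hy, hxy⟩, rfl⟩

def rankPartners (ε : Setoid T) (X : Set T) (q : ℕ) : Set (Setoid T × Set T) :=
  {p | IsPBPair p.1 p.2 ∧ p.2.ncard = q ∧ joinRank ε X p.1 p.2 = q}

theorem mem_rankPartners_iff [Finite T] {ε η : Setoid T} {X Y : Set T} {q : ℕ}
    (hX : IsPBPair ε X) :
    (η, Y) ∈ rankPartners ε X q ↔
      IsPBPair η Y ∧ Y.ncard = q ∧ ∀ y ∈ Y, ∃ x ∈ X, (ε ⊔ η).r x y := by
  refine and_congr_right fun hY => ⟨fun ⟨hq, hrank⟩ => ⟨hq, ?_⟩, fun ⟨hq, h⟩ => ⟨hq, ?_⟩⟩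
  · exact (joinRank_eq_ncard_iff hX hY).mp (hrank.trans hq.symm)
  · exact ((joinRank_eq_ncard_iff hX hY).mpr h).trans hq

theorem rankPartners_mono [Finite T] {ε ε' : Setoid T} {X : Set T} {q : ℕ} (hX : IsPBPair ε X)
    (hX' : IsPBPair ε' X) (hle : ε ≤ ε') : rankPartners ε X q ⊆ rankPartners ε' X q := by
  rintro ⟨η, Y⟩ hp
  obtain ⟨hY, hq, h⟩ := (mem_rankPartners_iff hX).mp hp
  refine (mem_rankPartners_iff hX').mpr ⟨hY, hq, fun y hy => ?_⟩
  obtain ⟨x, hx, hxy⟩ := h y hy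
  exact ⟨x, hx, sup_le_sup_right hle η hxy⟩

end OneTwo

section Doubleton

variable {T : Type*} [DecidableEq T]

def doubletonSetoid (a b : T) : Setoid T :=
  Setoid.ker fun x => if x = b then a else x

theorem doubletonSetoid_rel (a b : T) : (doubletonSetoid a b).r a b :=
  show (if a = b then a else a) = (if b = b then a else b) by simp

theorem isOneTwo_doubletonSetoid [Finite T] (a b : T) : IsOneTwo (doubletonSetoid a b) :=
  isOneTwo_iff.mpr fun x y z (hy : (if x = b then a else x) = if y = b then a else y)
    (hz : (if x = b then a else x) = if z = b then a else z) => by grind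

theorem doubletonSetoid_rel_eq {a b x : T} (hxa : x ≠ a) (hxb : x ≠ b) :
    ∀ w, (doubletonSetoid a b).r x w → w = x := by
  intro w (hw : (if x = b then a else x) = if w = b then a else w)
  grind

end Doubleton

section EpsNK

variable {n k r : ℕ}

theorem isOneTwo_epsNK : IsOneTwo (epsNK n k) :=
  isOneTwo_iff.mpr fun x y z hy hz => by
    rcases hy with rfl | hy
    · exact Or.inl rfl
    rcases hz with rfl | hz
    · exact Or.inr (Or.inl rfl)
    simp only [Fin.ext_iff]
    omega

theorem epsNK_rel_eq_of_lt {x : Fin n} (hx : x.val < k) : ∀ w, (epsNK n k).r x w → w = x := by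
  rintro w (rfl | ⟨hkx, -⟩)
  · rfl
  · omega

theorem isPBPair_epsNK_domSet (hrk : r ≤ k) : IsPBPair (epsNK n k) (domSet n r) :=
  ⟨isOneTwo_epsNK, fun _ hx => epsNK_rel_eq_of_lt (lt_of_lt_of_le hx hrk)⟩

theorem epsNK_add_two_le : epsNK n (k + 2) ≤ epsNK n k := by
  rintro x y (rfl | ⟨hx, hy, hxy⟩)
  · exact (epsNK n k).refl x
  · exact Or.inr ⟨by omega, by omega, by omega⟩

end EpsNK

theorem ncard_preimage_val_insert_Ico {n k q : ℕ} (hq : 1 ≤ q) (hqk : q ≤ k) (hkn : k < n) :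
    (Fin.val ⁻¹' insert k (Set.Ico 1 q) : Set (Fin n)).ncard = q := by
  rw [Set.ncard_preimage_of_injective_subset_range Fin.val_injective,
    Set.ncard_insert_of_notMem, Set.ncard_Ico_nat]
  · omega
  · simp only [Set.mem_Ico]; omega
  · rintro x hx
    simp only [Set.mem_insert_iff, Set.mem_Ico] at hx
    exact ⟨⟨x, by omega⟩, rfl⟩

section SeparatingPartner

variable {n k r q : ℕ}

def separatingPartner (k q : ℕ) (hk : k + 2 ≤ n) : Setoid (Fin n) × Set (Fin n) :=
  (doubletonSetoid ⟨0, by omega⟩ ⟨k + 1, hk⟩, Fin.val ⁻¹' insert k (Set.Ico 1 q))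

theorem isPBPair_separatingPartner (hk : k + 2 ≤ n) (hk₀ : k ≠ 0) (hqk : q ≤ k + 1) :
    IsPBPair (separatingPartner k q hk).1 (separatingPartner k q hk).2 := by
  refine ⟨isOneTwo_doubletonSetoid _ _, fun y (hy : y.val = k ∨ 1 ≤ y.val ∧ y.val < q) => ?_⟩
  exact doubletonSetoid_rel_eq (Fin.ne_of_val_ne (show y.val ≠ 0 by omega))
    (Fin.ne_of_val_ne (show y.val ≠ k + 1 by omega))

theorem separatingPartner_mem (hk : k + 2 ≤ n) (hq : 1 ≤ q) (hqr : q ≤ r) (hrk : r ≤ k) :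
    separatingPartner k q hk ∈ rankPartners (epsNK n k) (domSet n r) q := by
  refine (mem_rankPartners_iff (isPBPair_epsNK_domSet hrk)).mpr
    ⟨isPBPair_separatingPartner hk (by omega) (by omega),
      ncard_preimage_val_insert_Ico hq (by omega) (by omega),
      fun y (hy : y.val = k ∨ 1 ≤ y.val ∧ y.val < q) => ?_⟩
  rcases hy with hy | ⟨-, hy⟩
  · refine ⟨⟨0, by omega⟩, show 0 < r by omega,
      Setoid.trans' _ (y := ⟨k + 1, by omega⟩) ?_ ?_⟩
    · exact le_sup_right (α := Setoid (Fin n)) (doubletonSetoid_rel _ _)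
    · exact le_sup_left (α := Setoid (Fin n)) (Or.inr ⟨by simp, by omega, by simp; omega⟩)
  · exact ⟨y, show y.val < r by omega, Setoid.refl' _ y⟩

theorem separatingPartner_not_mem (hk : k + 2 ≤ n) (hrk : r ≤ k) :
    separatingPartner k q hk ∉ rankPartners (epsNK n (k + 2)) (domSet n r) q := by
  have hX := isPBPair_epsNK_domSet (n := n) (show r ≤ k + 2 by omega)
  intro h
  obtain ⟨hY, -, hjoin⟩ := (mem_rankPartners_iff hX).mp h
  obtain ⟨x, hx, hxk⟩ := hjoin ⟨k, by omega⟩ (Or.inl rfl)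
  have hxr : x.val < r := hx
  have hkx := isOneTwo_epsNK.eq_of_sup_rel hY.1
    (doubletonSetoid_rel_eq (Fin.ne_of_val_ne (show k ≠ 0 by omega))
      (Fin.ne_of_val_ne (show k ≠ k + 1 by omega)))
    (Setoid.refl' _ _) (Setoid.symm' _ hxk) (epsNK_rel_eq_of_lt (show k < k + 2 by omega))
    (hX.2 x hx)
  rw [← hkx] at hxr
  exact absurd (show k < r from hxr) (by omega)

end SeparatingPartner

/-- If `n ≥ k ≥ r ≥ q ≥ 1`, `n ≡ k (mod 2)` and `n ≥ k + 2`, then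
`μ(n,k,r,q) > μ(n,k+2,r,q)`. -/
theorem mu_strict_antitone_in_k (n k r q : ℕ) (hq : 1 ≤ q) (hqr : q ≤ r) (hrk : r ≤ k)
    (hkn : k ≤ n) (hpar : n % 2 = k % 2) (hk2 : k + 2 ≤ n) :
    mu n (k + 2) r q < mu n k r q := by
  rw [mu, mu, if_pos ⟨hk2, by omega, by omega⟩, if_pos ⟨hkn, hrk, hpar⟩]
  have hsub : rankPartners (epsNK n (k + 2)) (domSet n r) q ⊆
      rankPartners (epsNK n k) (domSet n r) q :=
    rankPartners_mono (isPBPair_epsNK_domSet (by omega)) (isPBPair_epsNK_domSet hrk)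
      epsNK_add_two_le
  exact Set.ncard_lt_ncard ((Set.ssubset_iff_of_subset hsub).mpr ⟨separatingPartner k q hk2,
    separatingPartner_mem hk2 hq hqr hrk, separatingPartner_not_mem hk2 hrk⟩)
end

section
/- Every domain path in the join of two PB-pairs uses no element lying in a non-domain singleton class of either equivalence. Precisely: let (ε₁,X₁), (ε₂,X₂) be PB-pairs on a finite set T, and let x ∈ X₁, y ∈ X₂ lie in the same class of ε₁ ∨ ε₂. Then every element w of that (ε₁∨ε₂)-class other than x and y lies in a non-singleton class of ε₁ and in a non-singleton class of ε₂. -/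
/-!
Let `σ₁`, `σ₂` be the involutions of `T` swapping the two elements of each doubleton class
of `ε₁`, `ε₂`, and `τ = σ₂ σ₁`. Since `σ₁ τ σ₁ = τ⁻¹`, for a `σ₁`-fixed point `x` we get
`σ₁ (τ^k x) = τ^(-k) x` and `σ₂ (τ^k x) = τ^(1-k) x`, so the `(ε₁ ⊔ ε₂)`-class of `x` is its
`τ`-orbit. A `σ₁`-fixed point `τ^k x` of this orbit satisfies `τ^(2k) x = x`, while the
`σ₂`-fixed point `y = τ^j x` gives `τ^(1-2j) x = x`; as `k = 2k · j + (1 - 2j) · k`, this forces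
`τ^k x = x`. Hence `x` is the only `ε₁`-singleton of the class and, symmetrically, `y` its only
`ε₂`-singleton.
-/

open Equiv

theorem mul_zpow_mul_eq_zpow_neg_mul {G : Type*} [Group G] {s₁ s₂ : G} (h₁ : s₁ * s₁ = 1)
    (h₂ : s₂ * s₂ = 1) (k : ℤ) : s₁ * (s₂ * s₁) ^ k = (s₂ * s₁) ^ (-k) * s₁ := by
  have hconj : SemiconjBy s₁ (s₂ * s₁) (s₂ * s₁)⁻¹ := by
    rw [SemiconjBy, mul_inv_rev, mul_eq_one_iff_inv_eq.mp h₁, mul_eq_one_iff_inv_eq.mp h₂,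
      mul_assoc]
  rw [(hconj.zpow_right k).eq, inv_zpow, zpow_neg]

namespace Equiv.Perm

variable {T : Type*} {σ₁ σ₂ f : Perm T} {x y w : T}

theorem zpow_sub_apply_eq_self {m n : ℤ} (h : (f ^ m) x = (f ^ n) x) :
    (f ^ (m - n)) x = x := by
  rw [sub_eq_neg_add, zpow_add, mul_apply, h, ← mul_apply, ← zpow_add, neg_add_cancel,
    zpow_zero, one_apply]

theorem apply_zpow_apply_eq_zpow_neg_apply (h₁ : σ₁ * σ₁ = 1) (h₂ : σ₂ * σ₂ = 1)
    (hx : σ₁ x = x) (k : ℤ) : σ₁ (((σ₂ * σ₁) ^ k) x) = ((σ₂ * σ₁) ^ (-k)) x := by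
  rw [← mul_apply, mul_zpow_mul_eq_zpow_neg_mul h₁ h₂, mul_apply, hx]

theorem apply_zpow_apply_eq_zpow_one_sub_apply (h₁ : σ₁ * σ₁ = 1) (h₂ : σ₂ * σ₂ = 1)
    (hx : σ₁ x = x) (k : ℤ) : σ₂ (((σ₂ * σ₁) ^ k) x) = ((σ₂ * σ₁) ^ (1 - k)) x := by
  calc σ₂ (((σ₂ * σ₁) ^ k) x) = (σ₂ * σ₁) (σ₁ (((σ₂ * σ₁) ^ k) x)) := by
        rw [mul_apply, ← mul_apply σ₁ σ₁, h₁, one_apply]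
    _ = ((σ₂ * σ₁) ^ (1 - k)) x := by
        rw [apply_zpow_apply_eq_zpow_neg_apply h₁ h₂ hx, ← mul_apply, ← zpow_one_add,
          sub_eq_add_neg]

theorem eq_of_sameCycle_of_apply_eq_self (h₁ : σ₁ * σ₁ = 1) (h₂ : σ₂ * σ₂ = 1)
    (hx : σ₁ x = x) (hy : σ₂ y = y) (hw : σ₁ w = w) (hxy : (σ₂ * σ₁).SameCycle x y)
    (hxw : (σ₂ * σ₁).SameCycle x w) : w = x := by
  set τ := σ₂ * σ₁
  obtain ⟨j, rfl⟩ := hxy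
  obtain ⟨k, rfl⟩ := hxw
  have heven : (τ ^ (2 * k)) x = x := by
    have := zpow_sub_apply_eq_self
      (hw.symm.trans (apply_zpow_apply_eq_zpow_neg_apply h₁ h₂ hx k))
    rwa [show k - -k = 2 * k by ring] at this
  have hodd : (τ ^ (1 - 2 * j)) x = x := by
    have := zpow_sub_apply_eq_self
      ((apply_zpow_apply_eq_zpow_one_sub_apply h₁ h₂ hx j).symm.trans hy)
    rwa [show 1 - j - j = 1 - 2 * j by ring] at this
  calc (τ ^ k) x = ((τ ^ (2 * k)) ^ j * (τ ^ (1 - 2 * j)) ^ k) x := by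
        rw [← zpow_mul, ← zpow_mul, ← zpow_add]; ring_nf
    _ = x := by
        rw [mul_apply, zpow_apply_eq_self_of_apply_eq_self hodd,
          zpow_apply_eq_self_of_apply_eq_self heven]

theorem sameCycle_of_sup_rel {ε₁ ε₂ : Setoid T} (h₁ : σ₁ * σ₁ = 1) (h₂ : σ₂ * σ₂ = 1)
    (hε₁ : ∀ a b, ε₁.r a b → b = a ∨ b = σ₁ a) (hε₂ : ∀ a b, ε₂.r a b → b = a ∨ b = σ₂ a)
    (hx : σ₁ x = x) (hxw : (ε₁ ⊔ ε₂).r x w) : (σ₂ * σ₁).SameCycle x w := by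
  set τ := σ₂ * σ₁
  have le_ker : ∀ {ε : Setoid T} {σ : Perm T}, (∀ a b, ε.r a b → b = a ∨ b = σ a) →
      (∀ k : ℤ, τ.SameCycle x (σ ((τ ^ k) x))) → ε ≤ Setoid.ker (τ.SameCycle x) := by
    intro ε σ hε hσ
    have step : ∀ {a b}, ε.r a b → τ.SameCycle x a → τ.SameCycle x b := by
      rintro a b hab ⟨k, rfl⟩
      rcases hε _ _ hab with rfl | rfl
      exacts [⟨k, rfl⟩, hσ k]
    exact fun a b hab => propext ⟨step hab, step (ε.symm hab)⟩
  have hle := sup_le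
    (le_ker hε₁ fun k => ⟨-k, (apply_zpow_apply_eq_zpow_neg_apply h₁ h₂ hx k).symm⟩)
    (le_ker hε₂ fun k => ⟨1 - k, (apply_zpow_apply_eq_zpow_one_sub_apply h₁ h₂ hx k).symm⟩)
  exact (hle hxw).mp (SameCycle.refl τ x)

end Equiv.Perm

namespace Setoid

variable {T : Type*} {ε : Setoid T} {a : T}

open scoped Classical in
/-- The other element of the class of `a`, or `a` itself if that class is a singleton. -/
noncomputable def partner (ε : Setoid T) (a : T) : T :=
  if h : ∃ b, b ≠ a ∧ ε.r a b then h.choose else a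

theorem rel_partner (ε : Setoid T) (a : T) : ε.r a (partner ε a) := by
  unfold partner
  split_ifs with h
  exacts [h.choose_spec.2, ε.refl a]

theorem partner_ne_self_iff : partner ε a ≠ a ↔ ∃ b, b ≠ a ∧ ε.r a b := by
  unfold partner
  split_ifs with h
  · exact iff_of_true h.choose_spec.1 h
  · simpa using h

theorem partner_eq_self_iff : partner ε a = a ↔ ∀ b, ε.r a b → b = a := by
  simpa [not_imp_not] using (partner_ne_self_iff (ε := ε) (a := a)).not

end Setoid

namespace IsOneTwo

open Setoid

variable {T : Type*} [Finite T] {ε ε₁ ε₂ : Setoid T} {a b c x y w : T}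

theorem eq_or_eq_or_eq (h : IsOneTwo ε) (hb : ε.r a b) (hc : ε.r a c) :
    b = a ∨ c = a ∨ b = c := by
  by_contra! hne
  have := (Set.two_lt_ncard_iff (s := {z | ε.r a z})).2
    ⟨a, b, c, ε.refl a, hb, hc, hne.1.symm, hne.2.1.symm, hne.2.2⟩
  exact (h a).not_gt this

theorem eq_or_eq_partner (h : IsOneTwo ε) (hab : ε.r a b) : b = a ∨ b = partner ε a := by
  by_cases hba : b = a
  · exact Or.inl hba
  · have hne : partner ε a ≠ a := partner_ne_self_iff.2 ⟨b, hba, hab⟩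
    rcases h.eq_or_eq_or_eq hab (rel_partner ε a) with h' | h' | h'
    exacts [absurd h' hba, absurd h' hne, Or.inr h']

theorem partner_involutive (h : IsOneTwo ε) : Function.Involutive (partner ε) := fun a => by
  rcases h.eq_or_eq_partner (ε.symm (rel_partner ε a)) with h' | h'
  · rw [← h']
    exact h'.symm
  · exact h'.symm

noncomputable def partnerPerm (h : IsOneTwo ε) : Perm T :=
  h.partner_involutive.toPerm _

theorem partnerPerm_mul_self (h : IsOneTwo ε) : h.partnerPerm * h.partnerPerm = 1 :=
  Perm.ext h.partner_involutive

theorem eq_of_sup_rel_s17 (h₁ : IsOneTwo ε₁) (h₂ : IsOneTwo ε₂) (hx : partner ε₁ x = x)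
    (hy : partner ε₂ y = y) (hw : partner ε₁ w = w) (hxy : (ε₁ ⊔ ε₂).r x y)
    (hxw : (ε₁ ⊔ ε₂).r x w) : w = x := by
  have hsame : ∀ {z}, (ε₁ ⊔ ε₂).r x z → (h₂.partnerPerm * h₁.partnerPerm).SameCycle x z :=
    Perm.sameCycle_of_sup_rel h₁.partnerPerm_mul_self h₂.partnerPerm_mul_self
      (fun _ _ => h₁.eq_or_eq_partner) (fun _ _ => h₂.eq_or_eq_partner) hx
  exact Perm.eq_of_sameCycle_of_apply_eq_self h₁.partnerPerm_mul_self h₂.partnerPerm_mul_self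
    hx hy hw (hsame hxy) (hsame hxw)

end IsOneTwo

/-- Every element of a domain path of the join of two PB-pairs, other than its two
endpoints, lies in a non-singleton class of each of the two equivalences. -/
theorem domain_path_interior_in_nonsingleton_classes {T : Type*} [Finite T]
    (ε₁ ε₂ : Setoid T) (X₁ X₂ : Set T)
    (h₁ : IsPBPair ε₁ X₁) (h₂ : IsPBPair ε₂ X₂)
    (x y : T) (hx : x ∈ X₁) (hy : y ∈ X₂) (hxy : (ε₁ ⊔ ε₂).r x y) :
    ∀ w : T, (ε₁ ⊔ ε₂).r x w → w ≠ x → w ≠ y →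
      (∃ z : T, z ≠ w ∧ ε₁.r w z) ∧ (∃ z : T, z ≠ w ∧ ε₂.r w z) := by
  intro w hxw hwx hwy
  have hpx : ε₁.partner x = x := Setoid.partner_eq_self_iff.2 (h₁.2 x hx)
  have hpy : ε₂.partner y = y := Setoid.partner_eq_self_iff.2 (h₂.2 y hy)
  have hyx : (ε₂ ⊔ ε₁).r y x := sup_comm ε₁ ε₂ ▸ (ε₁ ⊔ ε₂).symm hxy
  have hyw : (ε₂ ⊔ ε₁).r y w := sup_comm ε₁ ε₂ ▸ (ε₁ ⊔ ε₂).trans ((ε₁ ⊔ ε₂).symm hxy) hxw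
  simp only [← Setoid.partner_ne_self_iff]
  exact ⟨fun hw => hwx (h₁.1.eq_of_sup_rel_s17 h₂.1 hpx hpy hw hxy hxw),
    fun hw => hwy (h₂.1.eq_of_sup_rel_s17 h₁.1 hpy hpx hw hyx hyw)⟩
end
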